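/- Let d ≥ 1, let ψ : Fin m → (Fin d → ℂ) be unit vectors (∑ j, ‖ψ i j‖² = 1 for each i) and w : Fin m → ℝ with w i > 0, forming a weighted complex-projective 2-design: ∑ i, (w i : ℂ) • (ψᵢψᵢ*) = (d : ℂ)⁻¹ • 1 and ∑ i, (w i : ℂ) • ((ψᵢψᵢ*) ⊗ₖ (ψᵢψᵢ*)) = (2 / (d * (d + 1)) : ℂ) • P_sym, where ψᵢψᵢ* is the rank-one matrix with (j,k) entry ψ i j * star (ψ i k), and P_sym is the matrix indexed by (Fin d × Fin d) × (Fin d × Fin d) with entry P_sym (i,j) (k,l) = (1/2) * (if i = k ∧ j = l then 1 else 0) + (1/2) * (if i = l ∧ j = k then 1 else 0). Then A defined by A i = ((d * w i) : ℂ) • (ψᵢψᵢ*) is a measurement, and its Fisher information matrix satisfies F(A) = (2 / (d + 1) : ℂ) • P_sym^Γ, where the partial transpose is given entrywise by P^Γ ((i,j),(k,l)) = P ((i,l),(k,j)). -/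

import Mathlib

open Matrix
open scoped Kronecker ComplexOrder

noncomputable section

/-- A measurement (POVM): a finite family of positive semidefinite matrices summing to `1`. -/
def IsMeasurement {ι κ : Type*} [Fintype ι] [DecidableEq ι] [Fintype κ]
    (A : κ → Matrix ι ι ℂ) : Prop :=
  (∀ x, (A x).PosSemidef) ∧ ∑ x, A x = 1

/-- `A` is a post-processing of `B`: `A ⪯ B`. -/
def PostProc {ι : Type*} {n m : ℕ}
    (A : Fin n → Matrix ι ι ℂ) (B : Fin m → Matrix ι ι ℂ) : Prop :=
  ∃ μ : Fin n → Fin m → ℝ,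
    (∀ x y, 0 ≤ μ x y) ∧ (∀ y, ∑ x, μ x y = 1) ∧
    (∀ x, A x = ∑ y, (μ x y : ℂ) • B y)

/-- The outer product `|E⟩⟨F|` of the vectorizations of two matrices. -/
def outerProd {ι : Type*} (E F : Matrix ι ι ℂ) : Matrix (ι × ι) (ι × ι) ℂ :=
  Matrix.of fun p q => E p.1 p.2 * star (F q.1 q.2)

/-- The (un-normalized) Fisher information map of a measurement. -/
noncomputable def Fisher {ι κ : Type*} [Fintype ι] [Fintype κ]
    (A : κ → Matrix ι ι ℂ) : Matrix (ι × ι) (ι × ι) ℂ :=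
  ∑ x, (Matrix.trace (A x))⁻¹ • outerProd (A x) (A x)

open scoped MatrixOrder in
/-- The generalized Fisher information map of a measurement, relative to a
positive definite state `ρ` (with positive semidefinite square root `ρ^{1/2}`). -/
noncomputable def FisherRho {ι κ : Type*} [Fintype ι] [DecidableEq ι] [Fintype κ]
    {ρ : Matrix ι ι ℂ} (hρ : ρ.PosDef) (A : κ → Matrix ι ι ℂ) :
    Matrix (ι × ι) (ι × ι) ℂ :=
  ∑ x, (Matrix.trace (ρ * A x))⁻¹ •
    outerProd (CFC.sqrt ρ * A x) (CFC.sqrt ρ * A x)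

/-- The height of a finite family of self-adjoint matrices: the infimum of the traces of
Hermitian matrices dominating every member in the Loewner order. -/
noncomputable def height {ι κ : Type*} [Fintype ι] [Fintype κ]
    (X : κ → Matrix ι ι ℂ) : ℝ :=
  sInf { t : ℝ | ∃ H : Matrix ι ι ℂ, H.IsHermitian ∧
    (∀ i, (H - X i).PosSemidef) ∧ t = (Matrix.trace H).re }

/-!
For a unit vector `ψ` the entries of `P = ψψ*` satisfy `P a b * conj (P c e) = P a c * P e b`, so
`|P⟩⟨P|` is the partial transpose of `P ⊗ P`. Since `tr P = 1`, the weight `1 / tr (d w P)`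
cancels one factor of `d w`, leaving `F(A) = d · (∑ w P ⊗ P)^Γ`, which the second design
condition evaluates; the first design condition is exactly `∑ A = 1`.
-/

namespace Matrix

variable {ι : Type*}

def partialTranspose (R : Type*) [Semiring R] :
    Matrix (ι × ι) (ι × ι) R →ₗ[R] Matrix (ι × ι) (ι × ι) R where
  toFun M := of fun p q => M (p.1, q.2) (q.1, p.2)
  map_add' _ _ := rfl
  map_smul' _ _ := rfl

@[simp]
theorem partialTranspose_apply {R : Type*} [Semiring R] (M : Matrix (ι × ι) (ι × ι) R)
    (p q : ι × ι) : partialTranspose R M p q = M (p.1, q.2) (q.1, p.2) :=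
  rfl

theorem trace_vecMulVec_self_star [Fintype ι] {v : ι → ℂ} (hv : ∑ j, ‖v j‖ ^ 2 = 1) :
    (vecMulVec v (star v)).trace = 1 := by
  simp only [trace_vecMulVec, dotProduct, Pi.star_apply, RCLike.star_def, Complex.mul_conj']
  exact_mod_cast hv

end Matrix

theorem outerProd_smul {ι : Type*} (a b : ℂ) (E F : Matrix ι ι ℂ) :
    outerProd (a • E) (b • F) = (a * star b) • outerProd E F := by
  ext p q
  simp only [outerProd, of_apply, Matrix.smul_apply, smul_eq_mul, star_mul']
  ring

theorem outerProd_vecMulVec_self_star {ι : Type*} (v : ι → ℂ) :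
    outerProd (vecMulVec v (star v)) (vecMulVec v (star v)) =
      partialTranspose ℂ (vecMulVec v (star v) ⊗ₖ vecMulVec v (star v)) := by
  ext p q
  simp only [outerProd, partialTranspose_apply, of_apply, vecMulVec_apply, kroneckerMap_apply,
    Pi.star_apply, star_mul', star_star]
  ring

theorem Fisher_ofReal_smul_of_trace_eq_one {ι κ : Type*} [Fintype ι] [Fintype κ] (c : κ → ℝ)
    (P : κ → Matrix ι ι ℂ) (hP : ∀ x, (P x).trace = 1) :
    Fisher (fun x => (c x : ℂ) • P x) = ∑ x, (c x : ℂ) • outerProd (P x) (P x) := by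
  refine Finset.sum_congr rfl fun x _ => ?_
  rw [trace_smul, hP, smul_eq_mul, mul_one, outerProd_smul, smul_smul, Complex.star_def,
    Complex.conj_ofReal]
  by_cases hc : (c x : ℂ) = 0
  · simp [hc]
  · field_simp

theorem stmt13_general {d m : ℕ} (hd : 1 ≤ d) (ψ : Fin m → Fin d → ℂ) (w : Fin m → ℝ)
    (hw : ∀ i, 0 < w i)
    (hunit : ∀ i, ∑ j, ‖ψ i j‖ ^ 2 = 1)
    (P : Fin m → Matrix (Fin d) (Fin d) ℂ)
    (hP : ∀ i, P i = Matrix.of fun j k => ψ i j * star (ψ i k))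
    (Psym : Matrix (Fin d × Fin d) (Fin d × Fin d) ℂ)
    (hdesign1 : ∑ i, (w i : ℂ) • P i = ((d : ℂ))⁻¹ • 1)
    (hdesign2 : ∑ i, (w i : ℂ) • (P i ⊗ₖ P i) =
      ((2 : ℂ) / ((d : ℂ) * ((d : ℂ) + 1))) • Psym)
    (A : Fin m → Matrix (Fin d) (Fin d) ℂ)
    (hAdef : ∀ i, A i = ((d : ℂ) * (w i : ℂ)) • P i) :
    IsMeasurement A ∧
    Fisher A = ((2 : ℂ) / ((d : ℂ) + 1)) •
      Matrix.of (fun p q : Fin d × Fin d => Psym (p.1, q.2) (q.1, p.2)) := by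
  obtain rfl : P = fun i => vecMulVec (ψ i) (star (ψ i)) := funext hP
  obtain rfl : A = fun i => ((d * w i : ℝ) : ℂ) • vecMulVec (ψ i) (star (ψ i)) := by
    funext i; rw [hAdef]; push_cast; rfl
  have hd0 : (d : ℂ) ≠ 0 := by exact_mod_cast (by omega : d ≠ 0)
  refine ⟨⟨fun i => (posSemidef_vecMulVec_self_star _).smul ?_, ?_⟩, ?_⟩
  · exact_mod_cast mul_nonneg d.cast_nonneg (hw i).le
  · simp_rw [Complex.ofReal_mul, Complex.ofReal_natCast, mul_smul, ← Finset.smul_sum, hdesign1,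
      smul_smul, mul_inv_cancel₀ hd0, one_smul]
  · rw [Fisher_ofReal_smul_of_trace_eq_one _ _ fun i => trace_vecMulVec_self_star (hunit i)]
    simp_rw [outerProd_vecMulVec_self_star, ← map_smul, ← map_sum, Complex.ofReal_mul,
      Complex.ofReal_natCast, mul_smul, ← Finset.smul_sum, hdesign2, smul_smul, map_smul]
    congr 1
    field_simp

/-- The Fisher information matrix of a weighted 2-design POVM is
2/(d+1) times the partial transpose of the symmetric projection. -/
theorem stmt13 {d m : ℕ} (hd : 1 ≤ d) (ψ : Fin m → Fin d → ℂ) (w : Fin m → ℝ)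
    (hw : ∀ i, 0 < w i)
    (hunit : ∀ i, ∑ j, ‖ψ i j‖ ^ 2 = 1)
    (P : Fin m → Matrix (Fin d) (Fin d) ℂ)
    (hP : ∀ i, P i = Matrix.of fun j k => ψ i j * star (ψ i k))
    (Psym : Matrix (Fin d × Fin d) (Fin d × Fin d) ℂ)
    (hPsym : ∀ p q : Fin d × Fin d, Psym p q =
      (1 / 2) * (if p.1 = q.1 ∧ p.2 = q.2 then 1 else 0) +
      (1 / 2) * (if p.1 = q.2 ∧ p.2 = q.1 then 1 else 0))
    (hdesign1 : ∑ i, (w i : ℂ) • P i = ((d : ℂ))⁻¹ • 1)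
    (hdesign2 : ∑ i, (w i : ℂ) • (P i ⊗ₖ P i) =
      ((2 : ℂ) / ((d : ℂ) * ((d : ℂ) + 1))) • Psym)
    (A : Fin m → Matrix (Fin d) (Fin d) ℂ)
    (hAdef : ∀ i, A i = ((d : ℂ) * (w i : ℂ)) • P i) :
    IsMeasurement A ∧
    Fisher A = ((2 : ℂ) / ((d : ℂ) + 1)) •
      Matrix.of (fun p q : Fin d × Fin d => Psym (p.1, q.2) (q.1, p.2)) :=
  stmt13_general hd ψ w hw hunit P hP Psym hdesign1 hdesign2 A hAdef
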